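/- arXiv:2210.01897 — 4 statements merged into one kernel-verified Lean document; each statement's English description precedes it below -/
import Mathlib

section
/- Let G = (V,E) be a DAG and let G_R be its reverse DAG. Then for every visit rule r for G_R, the pebbling number of G satisfies p(G) ≥ b_r(G_R), where b_r(G_R) is the minimum of b_r(ψ) over all r-visits ψ of G_R. -/
/-! Read a pebbling schedule of `G` backwards and build an `r`-sequence of `G_R` greedily: on
meeting the placement of `w`, append `w` if it is not yet visited and already enabled. Throughout,
the boundary of the sequence stays inside the current configuration: a vertex can only enter the
boundary through an enabler containing `w`, i.e. as a predecessor of `w` in `G`, and those carry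
pebbles when `w` is placed. The vertices pebbled before the current moment form a
predecessor-closed set `A`; at the first placement of `w` (so `w ∉ A`), every successor of `w` lies
outside `A`, so was placed only later and has already been visited. Hence `w` is enabled there, and
the sequence ends as an `r`-visit whose boundary never exceeds the number of pebbles. -/

universe u

variable {V : Type u}

/-- Acyclicity of an edge relation (DAG condition). -/
def Acyclic (E : V → V → Prop) : Prop := ∀ v : V, ¬ Relation.TransGen E v v

/-- Immediate predecessors of a vertex. -/
def pre (E : V → V → Prop) (v : V) : Set V := {u | E u v}

/-- Immediate successors of a vertex. -/
def suc (E : V → V → Prop) (v : V) : Set V := {u | E v u}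

/-- The reverse DAG edge relation. -/
def Erev (E : V → V → Prop) : V → V → Prop := fun u v => E v u

/-- `r` is a visit rule for the DAG with edge relation `E`. -/
def VisitRule (E : V → V → Prop) (r : V → Set (Set V)) : Prop :=
  ∀ v : V, (r v).Nonempty ∧ ∀ Q ∈ r v, Q ⊆ pre E v

/-- `ψ` is an `r`-sequence. -/
def IsRSeq (r : V → Set (Set V)) (ψ : List V) : Prop :=
  ψ.Nodup ∧ ∀ i : Fin ψ.length, ∃ Q ∈ r (ψ.get i), ∀ u ∈ Q, u ∈ ψ.take i.1

/-- `ψ` is an `r`-visit: an `r`-sequence containing all vertices. -/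
def IsRVisit (r : V → Set (Set V)) (ψ : List V) : Prop :=
  IsRSeq r ψ ∧ ∀ v : V, v ∈ ψ

/-- The `r`-boundary of a sequence. -/
def boundary (r : V → Set (Set V)) (ψ : List V) : Set V :=
  {v | v ∉ ψ ∧ ∃ Q ∈ r v, Q ≠ (∅ : Set V) ∧ ∀ u ∈ Q, u ∈ ψ}

/-- The `r`-boundary complexity of a sequence. -/
noncomputable def bnd (r : V → Set (Set V)) (ψ : List V) : ℕ :=
  (Finset.Icc 1 ψ.length).sup fun i => (boundary r (ψ.take i)).ncard

/-- The `r`-boundary complexity of a DAG: minimum over `r`-visits. -/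
noncomputable def bndMin (r : V → Set (Set V)) : ℕ :=
  sInf {m | ∃ ψ : List V, IsRVisit r ψ ∧ bnd r ψ = m}

/-- One move of the (one-color) pebble game: place a pebble on a vertex all of whose
immediate predecessors carry pebbles, or remove a pebble. -/
def PebbleStep [DecidableEq V] (E : V → V → Prop) (s t : Finset V) : Prop :=
  (∃ v, v ∉ s ∧ (∀ u, E u v → u ∈ s) ∧ t = insert v s) ∨ (∃ v ∈ s, t = s.erase v)

/-- A complete pebbling schedule, given by its list of configurations, starting from
no pebbles, in which every vertex is pebbled at least once. -/
def IsPebbling [DecidableEq V] (E : V → V → Prop) (φ : List (Finset V)) : Prop :=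
  φ.head? = some (∅ : Finset V) ∧ List.Chain' (PebbleStep E) φ ∧ ∀ v : V, ∃ s ∈ φ, v ∈ s

/-- Maximum number of pebbles simultaneously on the DAG. -/
def maxPebbles [DecidableEq V] (φ : List (Finset V)) : ℕ :=
  (φ.map Finset.card).foldr max 0

/-- The pebbling number of a DAG. -/
noncomputable def pebblingNumber [DecidableEq V] (E : V → V → Prop) : ℕ :=
  sInf {m | ∃ φ : List (Finset V), IsPebbling E φ ∧ maxPebbles φ ≤ m}

def PredClosed (E : V → V → Prop) (A : Set V) : Prop :=
  ∀ v ∈ A, ∀ u, E u v → u ∈ A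

theorem Acyclic.exists_forall_not_rel [Finite V] {E : V → V → Prop} (hG : Acyclic E)
    {S : Set V} (hS : S.Nonempty) : ∃ v ∈ S, ∀ w ∈ S, ¬ E v w := by
  have : Std.Irrefl (Relation.TransGen (flip E)) :=
    ⟨fun v h => hG v (Relation.transGen_swap.mp h)⟩
  obtain ⟨v, hvS, hv⟩ :=
    (Finite.wellFounded_of_trans_of_irrefl (Relation.TransGen (flip E))).has_min S hS
  exact ⟨v, hvS, fun w hw hvw => hv w hw (.single hvw)⟩

theorem VisitRule.exists_enabler {E : V → V → Prop} {r : V → Set (Set V)}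
    (hr : VisitRule E r) {ψ : List V} {w : V} (h : ∀ u, E u w → u ∈ ψ) :
    ∃ Q ∈ r w, ∀ u ∈ Q, u ∈ ψ :=
  let ⟨Q, hQ⟩ := (hr w).1
  ⟨Q, hQ, fun u hu => h u ((hr w).2 Q hQ hu)⟩

theorem IsRSeq.append_singleton {r : V → Set (Set V)} {ψ : List V} {w : V}
    (h : IsRSeq r ψ) (hw : w ∉ ψ) (hQ : ∃ Q ∈ r w, ∀ u ∈ Q, u ∈ ψ) :
    IsRSeq r (ψ ++ [w]) := by
  refine ⟨List.nodup_append'.mpr ⟨h.1, List.nodup_singleton w, by simpa using hw⟩, ?_⟩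
  rintro ⟨i, hi⟩
  rw [List.length_append, List.length_singleton] at hi
  rcases Nat.lt_succ_iff_lt_or_eq.mp hi with hi | rfl
  · obtain ⟨Q, hQr, hQψ⟩ := h.2 ⟨i, hi⟩
    refine ⟨Q, by simpa [List.getElem_append_left hi] using hQr, fun u hu => ?_⟩
    rw [List.take_append_of_le_length hi.le]
    exact hQψ u hu
  · simpa using hQ

theorem boundary_nil (r : V → Set (Set V)) : boundary r ([] : List V) = ∅ := by
  ext v
  simp only [boundary, List.not_mem_nil, Set.mem_ofPred_eq, Set.mem_empty_iff_false, iff_false]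
  rintro ⟨-, Q, -, hQ, hQψ⟩
  obtain ⟨u, hu⟩ := Set.nonempty_iff_ne_empty.mpr hQ
  exact hQψ u hu

theorem boundary_append_singleton_subset {E : V → V → Prop} {r : V → Set (Set V)}
    (hr : VisitRule E r) (ψ : List V) (w : V) :
    boundary r (ψ ++ [w]) ⊆ (boundary r ψ \ {w}) ∪ suc E w := by
  rintro v ⟨hvψ, Q, hQr, hQ, hQψ⟩
  simp only [List.mem_append, List.mem_singleton, not_or] at hvψ hQψ
  by_cases hwQ : w ∈ Q
  · exact Or.inr ((hr v).2 Q hQr hwQ)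
  · refine Or.inl ⟨⟨hvψ.1, Q, hQr, hQ, fun u hu => ?_⟩, hvψ.2⟩
    exact (hQψ u hu).resolve_right (by rintro rfl; exact hwQ hu)

theorem bnd_append_singleton (r : V → Set (Set V)) (ψ : List V) (w : V) :
    bnd r (ψ ++ [w]) = max (bnd r ψ) (boundary r (ψ ++ [w])).ncard := by
  have hIcc : Finset.Icc 1 (ψ ++ [w]).length = insert (ψ.length + 1) (Finset.Icc 1 ψ.length) := by
    rw [List.length_append, List.length_singleton, Finset.insert_Icc_right_eq_Icc_add_one (by omega)]
  rw [bnd, hIcc, Finset.sup_insert, max_comm, bnd, List.take_of_length_le (by simp)]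
  congr 1
  refine Finset.sup_congr rfl fun i hi => ?_
  rw [List.take_append_of_le_length (Finset.mem_Icc.mp hi).2]

section Pebbling

variable [DecidableEq V] {E : V → V → Prop}

theorem card_le_maxPebbles {φ : List (Finset V)} {c : Finset V} (hc : c ∈ φ) :
    c.card ≤ maxPebbles φ := by
  induction φ with
  | nil => simp at hc
  | cons a l ih =>
    rcases List.mem_cons.mp hc with rfl | hc
    · exact le_max_left _ _
    · exact (ih hc).trans (le_max_right _ _)

theorem PredClosed.union_of_pebbleStep {A : Set V} {s s' : Finset V} (hA : PredClosed E A)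
    (hsA : ↑s ⊆ A) (hstep : PebbleStep E s s') : PredClosed E (A ∪ ↑s') := by
  rcases hstep with ⟨w, -, hpre, rfl⟩ | ⟨w, -, rfl⟩
  · rintro v (hv | hv) u huv
    · exact Or.inl (hA v hv u huv)
    · rcases Finset.mem_insert.mp hv with rfl | hv
      · exact Or.inl (hsA (hpre u huv))
      · exact Or.inl (hA v (hsA hv) u huv)
  · rw [Set.union_eq_left.mpr ((Finset.coe_subset.mpr (Finset.erase_subset w s)).trans hsA)]
    exact hA

theorem exists_pebbleChain_of_predClosed [Finite V] (hG : Acyclic E) (S : Finset V)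
    (hS : PredClosed E ↑S) :
    ∃ φ : List (Finset V), φ.head? = some ∅ ∧ List.IsChain (PebbleStep E) φ ∧
      φ.getLast? = some S := by
  induction S using Finset.strongInduction with
  | H S ih =>
  rcases S.eq_empty_or_nonempty with rfl | hne
  · exact ⟨[∅], rfl, List.isChain_singleton _, rfl⟩
  obtain ⟨v, hvS, hv⟩ := hG.exists_forall_not_rel (Finset.coe_nonempty.mpr hne)
  have hpre : ∀ u, E u v → u ∈ S.erase v := fun u huv =>
    Finset.mem_erase.mpr ⟨by rintro rfl; exact hv u hvS huv, hS v hvS u huv⟩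
  have hS' : PredClosed E ↑(S.erase v) := fun w hw u huw =>
    Finset.mem_erase.mpr ⟨by rintro rfl; exact hv w (Finset.mem_of_mem_erase hw) huw,
      hS w (Finset.mem_of_mem_erase hw) u huw⟩
  obtain ⟨φ, hhead, hchain, hlast⟩ := ih _ (Finset.erase_ssubset hvS) hS'
  refine ⟨φ ++ [S], ?_, hchain.append (List.isChain_singleton S) ?_, List.getLast?_concat⟩
  · rw [List.head?_append, hhead, Option.some_or]
  · intro x hx y hy
    obtain rfl : S.erase v = x := by simpa [hlast] using hx
    obtain rfl : S = y := by simpa using hy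
    exact Or.inl ⟨v, Finset.notMem_erase v S, hpre, (Finset.insert_erase hvS).symm⟩

theorem exists_isPebbling [Fintype V] (hG : Acyclic E) : ∃ φ, IsPebbling E φ := by
  obtain ⟨φ, hhead, hchain, hlast⟩ :=
    exists_pebbleChain_of_predClosed hG Finset.univ fun _ _ u _ => Finset.mem_univ u
  exact ⟨φ, hhead, hchain, fun v => ⟨_, List.mem_of_getLast? hlast, Finset.mem_univ v⟩⟩

end Pebbling

section Scan

variable [DecidableEq V] {E : V → V → Prop} {r : V → Set (Set V)}

theorem exists_rSeq_of_place (hr : VisitRule (Erev E) r) {s : Finset V} {w : V} (hws : w ∉ s)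
    (hpre : ∀ u, E u w → u ∈ s) {A : Set V} (hA : PredClosed E A) {ψ : List V}
    (hψ : IsRSeq r ψ) (hB : boundary r ψ ⊆ ↑(insert w s)) (hcov : ∀ v ∉ A, v ≠ w → v ∈ ψ) :
    ∃ ψ' : List V, IsRSeq r ψ' ∧ boundary r ψ' ⊆ ↑s ∧ (∀ v ∉ A, v ∈ ψ') ∧
      bnd r ψ' ≤ max (bnd r ψ) s.card := by
  by_cases hvisit : w ∉ ψ ∧ ∃ Q ∈ r w, ∀ u ∈ Q, u ∈ ψ
  · have hB' : boundary r (ψ ++ [w]) ⊆ ↑s := by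
      intro v hv
      rcases boundary_append_singleton_subset hr ψ w hv with ⟨hvB, hvw⟩ | hvw
      · exact (Finset.mem_insert.mp (hB hvB)).resolve_left hvw
      · exact hpre v hvw
    refine ⟨ψ ++ [w], hψ.append_singleton hvisit.1 hvisit.2, hB', fun v hvA => ?_, ?_⟩
    · by_cases hvw : v = w
      · simp [hvw]
      · exact List.mem_append_left _ (hcov v hvA hvw)
    · rw [bnd_append_singleton]
      exact max_le_max le_rfl
        ((Set.ncard_le_ncard hB' (Finset.finite_toSet s)).trans (Set.ncard_coe_finset s).le)
  · refine ⟨ψ, hψ, fun v hv => ?_, fun v hvA => ?_, le_max_left _ _⟩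
    · refine (Finset.mem_insert.mp (hB hv)).resolve_left ?_
      rintro rfl
      obtain ⟨hvψ, Q, hQ, -, hQψ⟩ := hv
      exact hvisit ⟨hvψ, Q, hQ, hQψ⟩
    · by_cases hvw : v = w
      swap
      · exact hcov v hvA hvw
      subst hvw
      by_contra hvψ
      refine hvisit ⟨hvψ, hr.exists_enabler fun u hvu => hcov u ?_ ?_⟩
      · exact fun huA => hvA (hA u huA v hvu)
      · rintro rfl
        exact hws (hpre _ hvu)

theorem exists_rSeq_of_pebbleStep (hr : VisitRule (Erev E) r) {s s' : Finset V}
    (hstep : PebbleStep E s s') {A : Set V} (hsA : ↑s ⊆ A) (hA : PredClosed E A)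
    {ψ : List V} (hψ : IsRSeq r ψ) (hB : boundary r ψ ⊆ ↑s') (hcov : ∀ v ∉ A ∪ ↑s', v ∈ ψ) :
    ∃ ψ' : List V, IsRSeq r ψ' ∧ boundary r ψ' ⊆ ↑s ∧ (∀ v ∉ A, v ∈ ψ') ∧
      bnd r ψ' ≤ max (bnd r ψ) s.card := by
  rcases hstep with ⟨w, hws, hpre, rfl⟩ | ⟨w, -, rfl⟩
  · refine exists_rSeq_of_place hr hws hpre hA hψ hB fun v hvA hvw => hcov v ?_
    rintro (h | h)
    · exact hvA h
    · rcases Finset.mem_insert.mp h with rfl | h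
      exacts [hvw rfl, hvA (hsA h)]
  · have herase : ↑(s.erase w) ⊆ (↑s : Set V) := Finset.coe_subset.mpr (Finset.erase_subset w s)
    exact ⟨ψ, hψ, hB.trans herase,
      fun v hv => hcov v fun h => hv (h.elim id fun h => hsA (herase h)), le_max_left _ _⟩

theorem exists_rSeq_of_pebbleChain (hr : VisitRule (Erev E) r) {m : ℕ} (l : List (Finset V)) :
    ∀ (s : Finset V) (A : Set V), List.IsChain (PebbleStep E) (s :: l) →
      (∀ c ∈ s :: l, c.card ≤ m) → ↑s ⊆ A → PredClosed E A → (∀ v ∉ A, ∃ c ∈ l, v ∈ c) →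
      ∃ ψ : List V, IsRSeq r ψ ∧ boundary r ψ ⊆ ↑s ∧ (∀ v ∉ A, v ∈ ψ) ∧ bnd r ψ ≤ m := by
  induction l with
  | nil =>
    intro s A _ _ _ _ hcompl
    refine ⟨[], ⟨List.nodup_nil, fun i => i.elim0⟩, by simp [boundary_nil], fun v hv => ?_,
      by simp [bnd]⟩
    simpa using hcompl v hv
  | cons s' l ih =>
    intro s A hchain hcard hsA hA hcompl
    obtain ⟨hstep, hchain'⟩ := List.isChain_cons_cons.mp hchain
    obtain ⟨ψ, hψ, hB, hcov, hbnd⟩ := ih s' (A ∪ ↑s') hchain'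
      (fun c hc => hcard c (List.mem_cons_of_mem s hc)) Set.subset_union_right
      (hA.union_of_pebbleStep hsA hstep) fun v hv => by
        obtain ⟨c, hc, hvc⟩ := hcompl v fun h => hv (Or.inl h)
        rcases List.mem_cons.mp hc with rfl | hc
        exacts [absurd (Or.inr hvc) hv, ⟨c, hc, hvc⟩]
    obtain ⟨ψ', hψ', hB', hcov', hbnd'⟩ :=
      exists_rSeq_of_pebbleStep hr hstep hsA hA hψ hB hcov
    exact ⟨ψ', hψ', hB', hcov', hbnd'.trans (max_le hbnd (hcard s List.mem_cons_self))⟩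

theorem exists_rVisit_of_isPebbling (hr : VisitRule (Erev E) r) {φ : List (Finset V)}
    (hφ : IsPebbling E φ) : ∃ ψ : List V, IsRVisit r ψ ∧ bnd r ψ ≤ maxPebbles φ := by
  obtain ⟨hhead, hchain, hcompl⟩ := hφ
  obtain ⟨l, rfl⟩ : ∃ l, φ = ∅ :: l := List.head?_eq_some_iff.mp hhead
  obtain ⟨ψ, hψ, -, hcov, hbnd⟩ := exists_rSeq_of_pebbleChain hr l ∅ ∅ hchain
    (fun _ => card_le_maxPebbles) (by simp) (fun v hv => hv.elim) fun v _ => by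
      obtain ⟨c, hc, hvc⟩ := hcompl v
      rcases List.mem_cons.mp hc with rfl | hc
      exacts [absurd hvc (Finset.notMem_empty v), ⟨c, hc, hvc⟩]
  exact ⟨ψ, ⟨hψ, fun v => hcov v id⟩, hbnd⟩

end Scan

theorem stmt_0 {V : Type u} [Fintype V] [DecidableEq V] (E : V → V → Prop)
    (hG : Acyclic E) (r : V → Set (Set V)) (hr : VisitRule (Erev E) r) :
    bndMin r ≤ pebblingNumber E := by
  obtain ⟨φ₀, hφ₀⟩ := exists_isPebbling hG
  obtain ⟨φ, hφ, hφle⟩ : ∃ φ, IsPebbling E φ ∧ maxPebbles φ ≤ pebblingNumber E :=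
    Nat.sInf_mem (s := {m | ∃ φ, IsPebbling E φ ∧ maxPebbles φ ≤ m}) ⟨_, φ₀, hφ₀, le_rfl⟩
  obtain ⟨ψ, hψ, hψle⟩ := exists_rVisit_of_isPebbling hr hφ
  calc bndMin r ≤ bnd r ψ := Nat.sInf_le ⟨ψ, hψ, rfl⟩
    _ ≤ maxPebbles φ := hψle
    _ ≤ pebblingNumber E := hφle
end

section
/- Let ψ be an r^top-sequence of a DAG G = (V,E) and let u, v ∈ B_{r^top}(ψ) be distinct vertices. Then reach_{r^top}(u | ψu) ∩ reach_{r^top}(v | ψv) = ∅, where ψu and ψv denote ψ extended by u and by v respectively. -/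
universe u

variable {V : Type u}

/-- The topological visit rule. -/
def rtop (E : V → V → Prop) : V → Set (Set V) := fun v => {pre E v}

/-- Descendants of a vertex. -/
def des (E : V → V → Prop) (v : V) : Set V := {u | Relation.TransGen E v u}

/-- The `r`-enabled reach of `v` given the `r`-sequence `ψ`. -/
def reach (E : V → V → Prop) (r : V → Set (Set V)) (v : V) (ψ : List V) : Set V :=
  {u | ∃ ψ' : List V, (∀ x ∈ ψ' ++ [u], x ∈ des E v) ∧ IsRSeq r (ψ ++ (ψ' ++ [u]))}

/-! Prefixes of an `rtop`-sequence are closed under ancestors. A common element `x` of both reaches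
descends from `v`, so `v` occurs in the sequence `ψ u ψ' x` witnessing `x ∈ reach(u | ψu)`; as `v ∉ ψ`
and `v ≠ u`, it is a descendant of `u`. But the predecessor of `v` on a path from `u` lies in `ψ`
(because `v` is on the boundary), which puts its ancestor `u` in `ψ`, a contradiction. -/

section TopologicalVisit

variable {E : V → V → Prop} {ψ : List V}

theorem IsRSeq.rtop_mem_of_edge (h : IsRSeq (rtop E) ψ) {w p : V} (hw : w ∈ ψ) (hp : E p w) :
    p ∈ ψ := by
  obtain ⟨i, rfl⟩ := List.mem_iff_get.mp hw
  obtain ⟨Q, hQ, hQψ⟩ := h.2 i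
  rw [rtop, Set.mem_singleton_iff] at hQ
  subst hQ
  exact List.take_subset _ _ (hQψ p hp)

theorem IsRSeq.mem_of_reflTransGen_rtop (h : IsRSeq (rtop E) ψ) {z w : V}
    (hzw : Relation.ReflTransGen E z w) (hw : w ∈ ψ) : z ∈ ψ := by
  induction hzw using Relation.ReflTransGen.head_induction_on with
  | refl => exact hw
  | head hzb _ ih => exact h.rtop_mem_of_edge ih hzb

theorem mem_of_transGen_of_mem_boundary_rtop (hψ : IsRSeq (rtop E) ψ) {v z : V}
    (hv : v ∈ boundary (rtop E) ψ) (hzv : Relation.TransGen E z v) : z ∈ ψ := by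
  obtain ⟨p, hzp, hpv⟩ := Relation.TransGen.tail'_iff.mp hzv
  obtain ⟨-, Q, hQ, -, hQψ⟩ := hv
  rw [rtop, Set.mem_singleton_iff] at hQ
  subst hQ
  exact hψ.mem_of_reflTransGen_rtop hzp (hQψ p hpv)

theorem notMem_des_of_mem_boundary_rtop (hψ : IsRSeq (rtop E) ψ) {u v : V}
    (hu : u ∈ boundary (rtop E) ψ) (hv : v ∈ boundary (rtop E) ψ) : v ∉ des E u :=
  fun huv => hu.1 (mem_of_transGen_of_mem_boundary_rtop hψ hv huv)

theorem mem_or_mem_des_of_transGen_of_mem_reach_rtop {w x z : V}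
    (hx : x ∈ reach E (rtop E) w ψ) (hzx : Relation.TransGen E z x) : z ∈ ψ ∨ z ∈ des E w := by
  obtain ⟨ψ', hdes, hseq⟩ := hx
  have hz := hseq.mem_of_reflTransGen_rtop hzx.to_reflTransGen (by simp)
  exact (List.mem_append.mp hz).imp_right (hdes z)

end TopologicalVisit

theorem stmt_10_general {V : Type u} (E : V → V → Prop)
    (ψ : List V) (hψ : IsRSeq (rtop E) ψ) (u v : V) (huv : u ≠ v)
    (hu : u ∈ boundary (rtop E) ψ) (hv : v ∈ boundary (rtop E) ψ) :
    reach E (rtop E) u (ψ ++ [u]) ∩ reach E (rtop E) v (ψ ++ [v]) = ∅ := by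
  refine Set.eq_empty_of_forall_notMem fun x ⟨hxu, ⟨ψv, hdesv, _⟩⟩ => ?_
  have hvx : Relation.TransGen E v x := hdesv x (by simp)
  rcases mem_or_mem_des_of_transGen_of_mem_reach_rtop hxu hvx with hvψu | hvdes
  · rcases List.mem_append.mp hvψu with hvψ | hvu
    · exact hv.1 hvψ
    · exact huv (List.mem_singleton.mp hvu).symm
  · exact notMem_des_of_mem_boundary_rtop hψ hu hv hvdes

theorem stmt_10 {V : Type u} [Fintype V] [DecidableEq V] (E : V → V → Prop) (hG : Acyclic E)
    (ψ : List V) (hψ : IsRSeq (rtop E) ψ) (u v : V) (huv : u ≠ v)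
    (hu : u ∈ boundary (rtop E) ψ) (hv : v ∈ boundary (rtop E) ψ) :
    reach E (rtop E) u (ψ ++ [u]) ∩ reach E (rtop E) v (ψ ++ [v]) = ∅ :=
  stmt_10_general E ψ hψ u v huv hu hv
end

section
/- For any DAG G = (V,E) with n vertices there exists an r^top-visit ψ of G such that: (a) if d_out = 0, then b_{r^top}(ψ) = 0; (b) if d_out = 1, then b_{r^top}(ψ) = 1; and (c) if d_out ≤ D for some integer D ≥ 2, then b_{r^top}(ψ) ≤ ((D−1)/log₂ D)·log₂ n + 1. -/
/-!
Visit a source, then everything its visit sets off, before looking for the next source. When a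
vertex `w` is visited, the vertices it makes ready (at most `d_out` successors of `w`) are handled
one at a time, each together with its whole cascade (everything that then becomes ready in turn),
always choosing the seed with the smallest cascade. Cascades of distinct seeds are disjoint, so if
`k` seeds share `N` vertices the chosen one has at most `N / k` of them: while it is processed the
other `k - 1` seeds wait on the boundary, but the problem shrinks by a factor `k`. As
`k - 1 ≤ c log k` for `k ≤ d` with `c = (d - 1) / log d` (the ratio `(x - 1) / log x` increases by
concavity of `log`), the boundary never exceeds `1 + c log n`.
-/

universe u

variable {V : Type u}

/-- The maximum out-degree of a DAG. -/
noncomputable def doutMax [Fintype V] (E : V → V → Prop) : ℕ :=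
  Finset.univ.sup fun v : V => (suc E v).ncard

section Cascade

variable {E : V → V → Prop} {S W : Set V} {w x : V}

def PreClosed (E : V → V → Prop) (S : Set V) : Prop := ∀ v ∈ S, pre E v ⊆ S

def enabled (E : V → V → Prop) (S : Set V) : Set V := {v | v ∉ S ∧ pre E v ⊆ S}

def readySet (E : V → V → Prop) (S : Set V) : Set V := {v ∈ enabled E S | (pre E v).Nonempty}

def newlyEnabled (E : V → V → Prop) (S : Set V) (w : V) : Set V :=
  enabled E (insert w S) \ enabled E S

/-- The vertices that become enabled one after another once the seeds `W` are visited on top of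
`S`; a vertex that is already enabled at `S` enters only as a seed. -/
inductive InCascade (E : V → V → Prop) (S W : Set V) : V → Prop
  | seed {x : V} : x ∈ W → InCascade E S W x
  | step {x : V} : x ∉ S → ¬ pre E x ⊆ S →
      (∀ u ∈ pre E x, u ∉ S → InCascade E S W u) → InCascade E S W x

def cascade (E : V → V → Prop) (S W : Set V) : Set V := {x | InCascade E S W x}

theorem PreClosed.insert (hS : PreClosed E S) (hw : pre E w ⊆ S) : PreClosed E (insert w S) := by
  rintro v (rfl | hv)
  · exact hw.trans (Set.subset_insert _ _)
  · exact (hS v hv).trans (Set.subset_insert _ _)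

theorem newlyEnabled_subset_enabled : newlyEnabled E S w ⊆ enabled E (insert w S) :=
  Set.sdiff_subset

theorem newlyEnabled_subset_suc : newlyEnabled E S w ⊆ suc E w := by
  rintro x ⟨⟨hxS, hpre⟩, hx⟩
  by_contra hxw
  refine hx ⟨fun h => hxS (Set.mem_insert_of_mem _ h), fun u hu => ?_⟩
  exact (hpre hu).resolve_left (by rintro rfl; exact hxw hu)

theorem subset_cascade : W ⊆ cascade E S W := fun _ => InCascade.seed

theorem cascade_mono {W' : Set V} (h : W ⊆ W') : cascade E S W ⊆ cascade E S W' := by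
  intro x hx
  induction hx with
  | seed hx => exact InCascade.seed (h hx)
  | step hxS hpre _ ih => exact InCascade.step hxS hpre ih

theorem cascade_empty : cascade E S ∅ = ∅ := by
  refine Set.eq_empty_of_forall_notMem fun x hx => ?_
  induction hx with
  | seed hx => exact hx
  | step _ hpre _ ih => exact hpre fun u hu => by_contra (ih u hu)

theorem notMem_of_mem_cascade (hW : W ⊆ enabled E S) (hx : x ∈ cascade E S W) :
    x ∉ S := by
  cases hx with
  | seed hx => exact (hW hx).1
  | step hxS _ _ => exact hxS

theorem mem_of_mem_cascade_of_pre_subset (hx : x ∈ cascade E S W)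
    (hpre : pre E x ⊆ S) : x ∈ W := by
  cases hx with
  | seed hx => exact hx
  | step _ hpre' _ => exact absurd hpre hpre'

theorem disjoint_cascade_singleton {v : V} (hv : v ∈ enabled E S) (hw : w ∈ enabled E S)
    (hvw : v ≠ w) : Disjoint (cascade E S {v}) (cascade E S {w}) := by
  refine Set.disjoint_left.2 fun x hxv hxw => ?_
  induction hxv with
  | seed hx =>
    rw [Set.mem_singleton_iff] at hx
    subst hx
    exact hvw (Set.mem_singleton_iff.1 (mem_of_mem_cascade_of_pre_subset hxw hv.2))
  | step _ hpre _ ih =>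
    cases hxw with
    | seed hx => exact hpre (Set.mem_singleton_iff.1 hx ▸ hw.2)
    | step _ _ hpreW =>
      obtain ⟨u, hu, huS⟩ := Set.not_subset.1 hpre
      exact ih u hu huS (hpreW u hu huS)

theorem cascade_singleton (hw : w ∈ enabled E S) :
    cascade E S {w} =
      insert w (cascade E (insert w S) (newlyEnabled E S w)) := by
  ext x
  constructor
  · intro hx
    induction hx with
    | seed hx => exact Or.inl hx
    | @step x hxS hpre _ ih =>
      have hxw : x ≠ w := by rintro rfl; exact hpre hw.2
      right
      by_cases hpre' : pre E x ⊆ insert w S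
      · exact InCascade.seed ⟨⟨by simp [hxw, hxS], hpre'⟩, fun h => hpre h.2⟩
      · refine InCascade.step (by simp [hxw, hxS]) hpre' fun u hu huS => ?_
        exact (ih u hu fun h => huS (Set.mem_insert_of_mem _ h)).resolve_left
          fun h => huS (h ▸ Set.mem_insert _ _)
  · rintro (rfl | hx)
    · exact subset_cascade rfl
    induction hx with
    | @seed x hx =>
      obtain ⟨⟨hxS, hpre⟩, hx⟩ := hx
      have hpreS : ¬ pre E x ⊆ S := fun h => hx ⟨fun h' => hxS (Set.mem_insert_of_mem _ h'), h⟩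
      refine InCascade.step (fun h => hxS (Set.mem_insert_of_mem _ h)) hpreS fun u hu huS => ?_
      exact InCascade.seed ((hpre hu).resolve_right huS)
    | @step x hxS hpre _ ih =>
      refine InCascade.step (fun h => hxS (Set.mem_insert_of_mem _ h))
        (fun h => hpre (h.trans (Set.subset_insert _ _))) fun u hu huS => ?_
      by_cases huw : u = w
      · exact InCascade.seed huw
      · exact ih u hu (by simp [huw, huS])

theorem cascade_eq_union (hw : w ∈ W) :
    cascade E S W =
      cascade E S {w} ∪ cascade E (S ∪ cascade E S {w}) (W \ {w}) := by
  ext x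
  constructor
  · intro hx
    induction hx with
    | @seed x hx =>
      by_cases hxw : x = w
      · exact Or.inl (InCascade.seed hxw)
      · exact Or.inr (InCascade.seed ⟨hx, hxw⟩)
    | @step x hxS hpre _ ih =>
      by_cases hxC : x ∈ cascade E S {w}
      · exact Or.inl hxC
      right
      have hpre' : ¬ pre E x ⊆ S ∪ cascade E S {w} := fun h =>
        hxC (InCascade.step hxS hpre fun u hu huS => (h hu).resolve_left huS)
      refine InCascade.step (by simp [hxS, hxC]) hpre' fun u hu hu' => ?_
      simp only [Set.mem_union, not_or] at hu'
      exact (ih u hu hu'.1).resolve_left hu'.2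
  · rintro (hx | hx)
    · exact cascade_mono (Set.singleton_subset_iff.2 hw) hx
    induction hx with
    | seed hx => exact InCascade.seed hx.1
    | @step x hxS hpre _ ih =>
      simp only [Set.mem_union, not_or] at hxS
      refine InCascade.step hxS.1 (fun h => hpre (h.trans Set.subset_union_left)) fun u hu huS => ?_
      by_cases huC : u ∈ cascade E S {w}
      · exact cascade_mono (Set.singleton_subset_iff.2 hw) huC
      · exact ih u hu (by simp [huS, huC])

theorem readySet_insert_sdiff_newlyEnabled :
    readySet E (insert w S) \ (newlyEnabled E S w) = readySet E S \ {w} := by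
  ext x
  constructor
  · rintro ⟨⟨hxe, hne⟩, hx⟩
    have hxS : x ∈ enabled E S := by_contra fun h => hx ⟨hxe, h⟩
    exact ⟨⟨hxS, hne⟩, fun h => hxe.1 (Set.mem_insert_iff.2 (Or.inl h))⟩
  · rintro ⟨⟨hxS, hne⟩, hxw⟩
    have hx : x ∉ insert w S := by simp [Set.mem_singleton_iff.not.1 hxw, hxS.1]
    exact ⟨⟨⟨hx, hxS.2.trans (Set.subset_insert _ _)⟩, hne⟩, fun h => h.2 hxS⟩

theorem readySet_union_cascade_singleton :
    readySet E (S ∪ cascade E S {w}) = readySet E S \ {w} := by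
  ext x
  constructor
  · rintro ⟨⟨hx, hpre⟩, hne⟩
    simp only [Set.mem_union, not_or] at hx
    have hpreS : pre E x ⊆ S := by_contra fun h =>
      hx.2 (InCascade.step hx.1 h fun u hu huS => (hpre hu).resolve_left huS)
    exact ⟨⟨⟨hx.1, hpreS⟩, hne⟩, fun h => hx.2 (subset_cascade h)⟩
  · rintro ⟨⟨⟨hxS, hpre⟩, hne⟩, hxw⟩
    refine ⟨⟨?_, hpre.trans Set.subset_union_left⟩, hne⟩
    rintro (h | h)
    exacts [hxS h, hxw (mem_of_mem_cascade_of_pre_subset h hpre)]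

theorem sdiff_singleton_subset_enabled_union_cascade (hW : W ⊆ enabled E S) :
    W \ {w} ⊆ enabled E (S ∪ cascade E S {w}) := by
  rintro v ⟨hv, hvw⟩
  refine ⟨?_, (hW hv).2.trans Set.subset_union_left⟩
  rintro (h | h)
  exacts [(hW hv).1 h, hvw (mem_of_mem_cascade_of_pre_subset h (hW hv).2)]

end Cascade

section Card

variable {E : V → V → Prop} {S W : Set V} {w : V}

theorem exists_mul_ncard_cascade_singleton_le [Finite V] (hW : W ⊆ enabled E S)
    (hne : W.Nonempty) :
    ∃ w ∈ W, W.ncard * (cascade E S {w}).ncard ≤ (cascade E S W).ncard := by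
  classical
  have := Fintype.ofFinite V
  let C : V → Finset V := fun v => (cascade E S {v}).toFinset
  obtain ⟨w, hw, hmin⟩ := W.toFinset.exists_min_image (fun v => (C v).card) (by simpa using hne)
  rw [Set.mem_toFinset] at hw
  have hdisj : (W.toFinset : Set V).PairwiseDisjoint C := fun u hu v hv huv => by
    simp only [Set.coe_toFinset] at hu hv
    exact Set.disjoint_toFinset.2 (disjoint_cascade_singleton (hW hu) (hW hv) huv)
  have hsub : W.toFinset.biUnion C ⊆ (cascade E S W).toFinset := by
    simp only [Finset.biUnion_subset, Set.mem_toFinset, C, Set.toFinset_subset_toFinset]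
    exact fun v hv => cascade_mono (Set.singleton_subset_iff.2 hv)
  refine ⟨w, hw, ?_⟩
  calc W.ncard * (cascade E S {w}).ncard = W.toFinset.card • (C w).card := by
        simp [C, Set.ncard_eq_toFinset_card']
    _ ≤ ∑ v ∈ W.toFinset, (C v).card := Finset.card_nsmul_le_sum _ _ _ hmin
    _ = (W.toFinset.biUnion C).card := (Finset.card_biUnion hdisj).symm
    _ ≤ (cascade E S W).ncard := by
        rw [Set.ncard_eq_toFinset_card']; exact Finset.card_le_card hsub

theorem ncard_cascade_singleton [Finite V] (hw : w ∈ enabled E S) :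
    (cascade E S {w}).ncard =
      (cascade E (insert w S) (newlyEnabled E S w)).ncard + 1 := by
  rw [cascade_singleton hw, Set.ncard_insert_of_notMem]
  exact fun h => notMem_of_mem_cascade newlyEnabled_subset_enabled h (Set.mem_insert _ _)

theorem ncard_compl_union_cascade_lt [Finite V] (hw : w ∈ enabled E S) :
    (S ∪ cascade E S {w})ᶜ.ncard < Sᶜ.ncard :=
  Set.ncard_lt_ncard (compl_lt_compl_iff_lt.2 ((Set.ssubset_iff_of_subset Set.subset_union_left).2
    ⟨w, Or.inr (subset_cascade rfl), hw.1⟩))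

end Card

theorem log_natCast_le_log_natCast {m n : ℕ} (h : m ≤ n) : Real.log m ≤ Real.log n := by
  rcases m.eq_zero_or_pos with rfl | hm
  · simpa using Real.log_natCast_nonneg n
  · exact Real.log_le_log (by positivity) (by exact_mod_cast h)

theorem sub_one_add_mul_log_le {c : ℝ} {k m N : ℕ} (hc0 : 0 ≤ c)
    (hk : (k : ℝ) - 1 ≤ c * Real.log k) (hk0 : 0 < k) (hN : k * (m + 1) ≤ N) :
    (k : ℝ) - 1 + c * Real.log m ≤ c * Real.log N := by
  have hsplit : Real.log ((k * (m + 1) : ℕ) : ℝ) = Real.log k + Real.log ((m + 1 : ℕ) : ℝ) := by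
    rw [Nat.cast_mul, Real.log_mul (by positivity) (by positivity)]
  calc (k : ℝ) - 1 + c * Real.log m
      ≤ c * Real.log k + c * Real.log ((m + 1 : ℕ) : ℝ) :=
        add_le_add hk (mul_le_mul_of_nonneg_left (log_natCast_le_log_natCast m.le_succ) hc0)
    _ = c * Real.log ((k * (m + 1) : ℕ) : ℝ) := by rw [hsplit, mul_add]
    _ ≤ c * Real.log N := mul_le_mul_of_nonneg_left (log_natCast_le_log_natCast hN) hc0

theorem ncard_sdiff_singleton_add_mul_log_le {α : Type*} [Finite α] {R W : Set α} {w : α}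
    (hw : w ∈ W) {c : ℝ} (hc0 : 0 ≤ c) (hc : (W.ncard : ℝ) - 1 ≤ c * Real.log W.ncard)
    {m N : ℕ} (hN : W.ncard * (m + 1) ≤ N) :
    ((R \ {w}).ncard : ℝ) + c * Real.log m ≤ (R \ W).ncard + c * Real.log N := by
  have hcard := Set.ncard_le_ncard_sdiff_add_ncard (R \ {w}) (W \ {w})
  rw [Set.sdiff_sdiff, Set.union_sdiff_cancel (Set.singleton_subset_iff.2 hw),
    Set.ncard_sdiff_singleton_of_mem hw] at hcard
  have hk0 : 0 < W.ncard := (Set.ncard_pos).2 ⟨w, hw⟩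
  have hcard' : ((R \ {w}).ncard : ℝ) ≤ (R \ W).ncard + ((W.ncard : ℝ) - 1) := by
    rw [← Nat.cast_pred hk0]; exact_mod_cast hcard
  linarith [sub_one_add_mul_log_le hc0 hc hk0 hN]

section Continuation

variable {E : V → V → Prop} {S : Set V} {b : ℝ} {L L₁ L₂ : List V}

/-- Topological order is encoded by asking every prefix, together with `S`, to be closed under
predecessors. -/
def IsTopoContinuation (E : V → V → Prop) (S : Set V) (b : ℝ) (L : List V) : Prop :=
  ∀ p, p <+: L → PreClosed E (S ∪ {x | x ∈ p}) ∧ ((readySet E (S ∪ {x | x ∈ p})).ncard : ℝ) ≤ b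

namespace IsTopoContinuation

theorem nil (hS : PreClosed E S) (hb : ((readySet E S).ncard : ℝ) ≤ b) :
    IsTopoContinuation E S b [] := by
  intro p hp
  rw [List.prefix_nil.1 hp]
  simpa using ⟨hS, hb⟩

theorem cons {a : V} (hS : PreClosed E S) (hb : ((readySet E S).ncard : ℝ) ≤ b)
    (h : IsTopoContinuation E (insert a S) b L) : IsTopoContinuation E S b (a :: L) := by
  intro p hp
  rcases List.prefix_cons_iff.1 hp with rfl | ⟨t, rfl, ht⟩
  · simpa using ⟨hS, hb⟩
  · have hset : S ∪ {x | x ∈ a :: t} = insert a S ∪ {x | x ∈ t} := by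
      ext; simp [or_left_comm, or_assoc]
    rw [hset]
    exact h t ht

theorem append (h₁ : IsTopoContinuation E S b L₁)
    (h₂ : IsTopoContinuation E (S ∪ {x | x ∈ L₁}) b L₂) :
    IsTopoContinuation E S b (L₁ ++ L₂) := by
  rintro p ⟨r, hr⟩
  rcases List.append_eq_append_iff.1 hr with ⟨q, rfl, -⟩ | ⟨q, rfl, rfl⟩
  · exact h₁ p (List.prefix_append p q)
  · have hset : S ∪ {x | x ∈ L₁ ++ q} = S ∪ {x | x ∈ L₁} ∪ {x | x ∈ q} := by
      ext; simp [or_assoc]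
    rw [hset]
    exact h₂ q (List.prefix_append q r)

theorem mono {b' : ℝ} (h : IsTopoContinuation E S b L) (hb : b ≤ b') :
    IsTopoContinuation E S b' L :=
  fun p hp => ⟨(h p hp).1, (h p hp).2.trans hb⟩

theorem preClosed (h : IsTopoContinuation E S b L) : PreClosed E (S ∪ {x | x ∈ L}) :=
  (h L (List.prefix_refl L)).1

end IsTopoContinuation

end Continuation

section Construction

variable {E : V → V → Prop}

theorem exists_topoContinuation_cascade [Finite V] {d : ℕ}
    (hd : ∀ v, (suc E v).ncard ≤ d) {c : ℝ} (hc0 : 0 ≤ c)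
    (hc : ∀ k : ℕ, k ≤ d → (k : ℝ) - 1 ≤ c * Real.log k) {S W : Set V} (hS : PreClosed E S)
    (hW : W ⊆ enabled E S) (hWd : W.ncard ≤ d) :
    ∃ L : List V, L.Nodup ∧ {x | x ∈ L} = cascade E S W ∧
      IsTopoContinuation E S
        ((readySet E S \ W).ncard + 1 + c * Real.log (cascade E S W).ncard) L := by
  induction hn : Sᶜ.ncard using Nat.strong_induction_on generalizing S W with
  | _ n ih =>
  rcases W.eq_empty_or_nonempty with rfl | hne
  · refine ⟨[], List.nodup_nil, by simp [cascade_empty], .nil hS ?_⟩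
    simp [cascade_empty]
  obtain ⟨w, hw, hsize⟩ := exists_mul_ncard_cascade_singleton_le hW hne
  have hwe := hW hw
  have hcW := hc _ hWd
  have hlt : (insert w S)ᶜ.ncard < n :=
    hn ▸ Set.ncard_lt_ncard (compl_lt_compl_iff_lt.2 (Set.ssubset_insert hwe.1))
  obtain ⟨L₁, hnd₁, hL₁, hcont₁⟩ := ih _ hlt (hS.insert hwe.2) newlyEnabled_subset_enabled
    ((Set.ncard_le_ncard newlyEnabled_subset_suc).trans (hd w)) rfl
  have hL₀ : {x | x ∈ w :: L₁} = cascade E S {w} := by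
    rw [cascade_singleton hwe, ← hL₁]; ext; simp
  have hS₂ : PreClosed E (S ∪ cascade E S {w}) := by
    have := hcont₁.preClosed
    rwa [hL₁, Set.insert_union, ← Set.union_insert, ← cascade_singleton hwe] at this
  have hW₂ := sdiff_singleton_subset_enabled_union_cascade hW (w := w)
  obtain ⟨L₂, hnd₂, hL₂, hcont₂⟩ := ih _ (hn ▸ ncard_compl_union_cascade_lt hwe) hS₂ hW₂
    ((Set.ncard_le_ncard Set.sdiff_subset).trans hWd) rfl
  refine ⟨w :: L₁ ++ L₂, ?_, ?_, .append (.cons hS ?_ (hcont₁.mono ?_)) (hL₀ ▸ hcont₂.mono ?_)⟩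
  · refine (hnd₁.cons fun h => notMem_of_mem_cascade newlyEnabled_subset_enabled (hL₁.subset h)
      (Set.mem_insert _ _)).append hnd₂ fun x hx₀ hx₂ => ?_
    exact notMem_of_mem_cascade hW₂ (hL₂.subset hx₂) (Or.inr (hL₀.subset hx₀))
  · rw [cascade_eq_union hw, ← hL₂, ← hL₀]; ext; simp [or_assoc]
  · have h₀ := ncard_sdiff_singleton_add_mul_log_le (R := readySet E S) (m := 0) hw hc0 hcW
      (by simpa using Set.ncard_le_ncard (subset_cascade (E := E) (S := S) (W := W)))
    have h₁ : (readySet E S).ncard ≤ (readySet E S \ {w}).ncard + 1 := by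
      simpa using Set.ncard_le_ncard_sdiff_add_ncard (readySet E S) {w}
    rw [Nat.cast_zero, Real.log_zero, mul_zero, add_zero] at h₀
    have h₁' : ((readySet E S).ncard : ℝ) ≤ (readySet E S \ {w}).ncard + 1 := by exact_mod_cast h₁
    linarith
  · rw [readySet_insert_sdiff_newlyEnabled]
    linarith [ncard_sdiff_singleton_add_mul_log_le (R := readySet E S) hw hc0 hcW
      (ncard_cascade_singleton hwe ▸ hsize)]
  · rw [readySet_union_cascade_singleton, Set.sdiff_sdiff,
      Set.union_sdiff_cancel (Set.singleton_subset_iff.2 hw)]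
    have := mul_le_mul_of_nonneg_left (log_natCast_le_log_natCast (Set.ncard_le_ncard
      (cascade_eq_union (E := E) (S := S) hw ▸ Set.subset_union_right))) hc0
    linarith

end Construction

section Visit

variable {E : V → V → Prop}

theorem Acyclic.wellFounded [Finite V] (hG : Acyclic E) : WellFounded E := by
  have : IsTrans V (Relation.TransGen E) := ⟨fun _ _ _ => Relation.TransGen.trans⟩
  have : Std.Irrefl (Relation.TransGen E) := ⟨hG⟩
  exact Subrelation.wf Relation.TransGen.single (Finite.wellFounded_of_trans_of_irrefl _)

theorem Acyclic.exists_mem_enabled [Finite V] (hG : Acyclic E) {S : Set V} (hS : Sᶜ.Nonempty) :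
    ∃ s, s ∈ enabled E S := by
  obtain ⟨s, hs, hmin⟩ := hG.wellFounded.has_min _ hS
  exact ⟨s, hs, fun u hu => by_contra fun huS => hmin u huS hu⟩

theorem exists_topoContinuation_compl [Finite V] (hG : Acyclic E) {d : ℕ} (hd1 : 1 ≤ d)
    (hd : ∀ v, (suc E v).ncard ≤ d) {c : ℝ} (hc0 : 0 ≤ c)
    (hc : ∀ k : ℕ, k ≤ d → (k : ℝ) - 1 ≤ c * Real.log k) {S : Set V} (hS : PreClosed E S)
    (hready : readySet E S = ∅) :
    ∃ L : List V, L.Nodup ∧ {x | x ∈ L} = Sᶜ ∧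
      IsTopoContinuation E S (1 + c * Real.log (Nat.card V)) L := by
  induction hn : Sᶜ.ncard using Nat.strong_induction_on generalizing S with
  | _ n ih =>
  rcases Sᶜ.eq_empty_or_nonempty with hSc | hne
  · refine ⟨[], List.nodup_nil, by simp [hSc], .nil hS ?_⟩
    have := mul_nonneg hc0 (Real.log_natCast_nonneg (Nat.card V))
    simp only [hready, Set.ncard_empty, Nat.cast_zero]
    linarith
  obtain ⟨s, hs⟩ := hG.exists_mem_enabled hne
  obtain ⟨L₁, hnd₁, hL₁, hcont₁⟩ := exists_topoContinuation_cascade hd hc0 hc hS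
    (Set.singleton_subset_iff.2 hs) (by simpa using hd1)
  have hC : cascade E S {s} ⊆ Sᶜ := fun x hx =>
    notMem_of_mem_cascade (Set.singleton_subset_iff.2 hs) hx
  obtain ⟨L₂, hnd₂, hL₂, hcont₂⟩ := ih _ (hn ▸ ncard_compl_union_cascade_lt hs)
    (hL₁ ▸ hcont₁.preClosed)
    (by rw [readySet_union_cascade_singleton, hready, Set.empty_sdiff]) rfl
  refine ⟨L₁ ++ L₂, ?_, ?_, .append (hcont₁.mono ?_) (hL₁ ▸ hcont₂)⟩
  · refine List.nodup_append.2 ⟨hnd₁, hnd₂, fun a ha b hb hab => ?_⟩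
    exact (hL₂.subset hb) (Or.inr (hab ▸ hL₁.subset ha))
  · ext x
    have h₁ : x ∈ L₁ ↔ x ∈ cascade E S {s} := Set.ext_iff.1 hL₁ x
    have h₂ : x ∈ L₂ ↔ x ∉ S ∪ cascade E S {s} := Set.ext_iff.1 hL₂ x
    have h₃ : x ∈ cascade E S {s} → x ∉ S := @hC x
    simp only [Set.mem_union, not_or] at h₂
    change x ∈ L₁ ++ L₂ ↔ x ∉ S
    rw [List.mem_append]
    tauto
  · have := mul_le_mul_of_nonneg_left
      (log_natCast_le_log_natCast (Set.ncard_le_card (cascade E S {s}))) hc0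
    simp only [hready, Set.empty_sdiff, Set.ncard_empty, Nat.cast_zero]
    linarith

end Visit

theorem sub_one_div_log_le_sub_one_div_log {x y : ℝ} (hx : 1 < x) (hxy : x ≤ y) :
    (x - 1) / Real.log x ≤ (y - 1) / Real.log y := by
  have hy : 1 < y := hx.trans_le hxy
  have hanti := strictConcaveOn_log_Ioi.concaveOn.slope_anti (x := 1) (by norm_num)
  have h := hanti ⟨(zero_lt_one.trans hx : (0 : ℝ) < x), hx.ne'⟩
    ⟨(zero_lt_one.trans hy : (0 : ℝ) < y), hy.ne'⟩ hxy
  simp only [slope_def_field, Real.log_one, sub_zero] at h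
  rw [← inv_div, ← inv_div (Real.log y)]
  exact (inv_le_inv₀ (div_pos (Real.log_pos hx) (by linarith))
    (div_pos (Real.log_pos hy) (by linarith))).2 h

/-- Vanishes for `d ≤ 1`, through the junk values `Real.log 0 = Real.log 1 = 0` and `x / 0 = 0`. -/
noncomputable def logSlope (d : ℕ) : ℝ := ((d : ℝ) - 1) / Real.log d

theorem logSlope_eq_zero {d : ℕ} (hd : d ≤ 1) : logSlope d = 0 := by
  interval_cases d <;> simp [logSlope]

theorem logSlope_nonneg (d : ℕ) : 0 ≤ logSlope d := by
  rcases Nat.lt_or_ge 1 d with hd | hd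
  · exact div_nonneg (by linarith [(Nat.one_lt_cast (α := ℝ)).2 hd]) (Real.log_natCast_nonneg d)
  · exact (logSlope_eq_zero hd).ge

theorem logSlope_le_logSlope {d D : ℕ} (h : d ≤ D) : logSlope d ≤ logSlope D := by
  rcases Nat.lt_or_ge 1 d with hd | hd
  · exact sub_one_div_log_le_sub_one_div_log (by exact_mod_cast hd) (by exact_mod_cast h)
  · exact (logSlope_eq_zero hd).trans_le (logSlope_nonneg D)

theorem sub_one_le_logSlope_mul_log {k d : ℕ} (h : k ≤ d) :
    (k : ℝ) - 1 ≤ logSlope d * Real.log k := by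
  rcases Nat.lt_or_ge 1 k with hk | hk
  · have hlog : Real.log k ≠ 0 := (Real.log_pos (by exact_mod_cast hk)).ne'
    calc (k : ℝ) - 1 = logSlope k * Real.log k := by rw [logSlope, div_mul_cancel₀ _ hlog]
      _ ≤ logSlope d * Real.log k :=
        mul_le_mul_of_nonneg_right (logSlope_le_logSlope h) (Real.log_natCast_nonneg k)
  · have : (k : ℝ) ≤ 1 := by exact_mod_cast hk
    nlinarith [logSlope_nonneg d, Real.log_natCast_nonneg k]

theorem div_logb_mul_logb {b : ℝ} (hb : Real.log b ≠ 0) (a x y : ℝ) :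
    a / Real.logb b x * Real.logb b y = a / Real.log x * Real.log y := by
  by_cases hx : Real.log x = 0
  · simp [Real.logb, hx]
  · simp only [Real.logb]
    field_simp

section Boundary

variable {E : V → V → Prop} {ψ p : List V}

theorem boundary_rtop (L : List V) : boundary (rtop E) L = readySet E {x | x ∈ L} := by
  ext v
  simp [boundary, rtop, readySet, enabled, Set.nonempty_iff_ne_empty, Set.subset_def]
  tauto

theorem pre_subset_of_preClosed_concat (hG : Acyclic E) {a : V}
    (h : PreClosed E {x | x ∈ p ++ [a]}) : pre E a ⊆ {x | x ∈ p} := by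
  intro u hu
  have hu' : u ∈ p ++ [a] := h a (by simp) hu
  rw [List.mem_append, List.mem_singleton] at hu'
  exact hu'.resolve_right (by rintro rfl; exact hG u (.single hu))

theorem isRVisit_rtop (hG : Acyclic E) (hnd : ψ.Nodup) (hall : ∀ v, v ∈ ψ)
    (hcl : ∀ p, p <+: ψ → PreClosed E {x | x ∈ p}) : IsRVisit (rtop E) ψ := by
  refine ⟨⟨hnd, fun i => ⟨pre E (ψ.get i), rfl, fun u hu => ?_⟩⟩, hall⟩
  have h := hcl _ (List.take_prefix (i + 1) ψ)
  rw [List.take_succ_eq_append_getElem i.2] at h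
  exact pre_subset_of_preClosed_concat hG h hu

theorem bnd_rtop_le {b : ℝ} (hb0 : 0 ≤ b)
    (hb : ∀ p, p <+: ψ → ((readySet E {x | x ∈ p}).ncard : ℝ) ≤ b) :
    (bnd (rtop E) ψ : ℝ) ≤ b := by
  have : bnd (rtop E) ψ ≤ ⌊b⌋₊ := Finset.sup_le fun i _ =>
    Nat.le_floor (by rw [boundary_rtop]; exact hb _ (List.take_prefix i ψ))
  exact (Nat.cast_le.2 this).trans (Nat.floor_le hb0)

theorem ncard_readySet_le_bnd_rtop (hp : p <+: ψ) (hne : p ≠ []) :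
    (readySet E {x | x ∈ p}).ncard ≤ bnd (rtop E) ψ := by
  rw [List.prefix_iff_eq_take.1 hp, ← boundary_rtop]
  exact Finset.le_sup (f := fun i => (boundary (rtop E) (ψ.take i)).ncard)
    (Finset.mem_Icc.2 ⟨List.length_pos_iff.2 hne, hp.length_le⟩)

theorem ncard_suc_le_doutMax [Fintype V] (v : V) : (suc E v).ncard ≤ doutMax E :=
  Finset.le_sup (f := fun v => (suc E v).ncard) (Finset.mem_univ v)

theorem bnd_rtop_eq_zero [Fintype V] (h : doutMax E = 0) (ψ : List V) :
    bnd (rtop E) ψ = 0 := by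
  refine Nat.eq_zero_of_le_zero (Finset.sup_le fun i _ => ?_)
  rw [boundary_rtop, Nat.le_zero, Set.ncard_eq_zero]
  refine Set.eq_empty_of_forall_notMem fun v ⟨_, u, hu⟩ => ?_
  have := ((Set.ncard_pos).2 ⟨v, hu⟩).trans_le (ncard_suc_le_doutMax (E := E) u)
  omega

theorem one_le_bnd_rtop [Fintype V] (hG : Acyclic E) (hnd : ψ.Nodup) (hall : ∀ v, v ∈ ψ)
    (hcl : ∀ p, p <+: ψ → PreClosed E {x | x ∈ p}) (h : 0 < doutMax E) :
    1 ≤ bnd (rtop E) ψ := by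
  obtain ⟨u, -, hu⟩ := Finset.lt_sup_iff.1 h
  obtain ⟨v, huv⟩ := (Set.ncard_pos).1 hu
  obtain ⟨p, q, rfl⟩ := List.append_of_mem (hall v)
  have hpre := pre_subset_of_preClosed_concat hG (hcl (p ++ [v]) (by simp))
  have hvp : v ∉ p := fun hv => (List.nodup_append.1 hnd).2.2 v hv v (by simp) rfl
  have hne : p ≠ [] := List.ne_nil_of_mem (hpre huv)
  calc 1 ≤ (readySet E {x | x ∈ p}).ncard := (Set.ncard_pos).2 ⟨v, ⟨hvp, hpre⟩, u, huv⟩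
    _ ≤ bnd (rtop E) (p ++ v :: q) := ncard_readySet_le_bnd_rtop (List.prefix_append p _) hne

end Boundary

theorem exists_visit_ncard_readySet_le [Fintype V] {E : V → V → Prop} (hG : Acyclic E) :
    ∃ ψ : List V, ψ.Nodup ∧ (∀ v, v ∈ ψ) ∧ ∀ p, p <+: ψ → PreClosed E {x | x ∈ p} ∧
      ((readySet E {x | x ∈ p}).ncard : ℝ) ≤
        1 + logSlope (max (doutMax E) 1) * Real.log (Fintype.card V) := by
  have hd : ∀ v, (suc E v).ncard ≤ max (doutMax E) 1 :=
    fun v => (ncard_suc_le_doutMax v).trans (le_max_left _ _)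
  have hready : readySet E ∅ = ∅ :=
    Set.eq_empty_of_forall_notMem fun _ ⟨⟨_, hpre⟩, _, hu⟩ => hpre hu
  obtain ⟨ψ, hnd, hψ, hcont⟩ := exists_topoContinuation_compl hG (le_max_right _ _) hd
    (logSlope_nonneg _) (fun _ hk => sub_one_le_logSlope_mul_log hk) (fun _ h => h.elim) hready
  refine ⟨ψ, hnd, fun v => by simpa using (Set.ext_iff.1 hψ v).2, fun p hp => ?_⟩
  simpa [Nat.card_eq_fintype_card] using hcont p hp

theorem stmt_11_general {V : Type u} [Fintype V] (E : V → V → Prop)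
    (hG : Acyclic E) :
    ∃ ψ : List V, IsRVisit (rtop E) ψ ∧
      (doutMax E = 0 → bnd (rtop E) ψ = 0) ∧
      (doutMax E = 1 → bnd (rtop E) ψ = 1) ∧
      (∀ D : ℕ, 2 ≤ D → doutMax E ≤ D →
        (bnd (rtop E) ψ : ℝ) ≤
          ((D : ℝ) - 1) / Real.logb 2 (D : ℝ) * Real.logb 2 (Fintype.card V : ℝ) + 1) := by
  obtain ⟨ψ, hnd, hall, hψ⟩ := exists_visit_ncard_readySet_le hG
  have hcl : ∀ p, p <+: ψ → PreClosed E {x | x ∈ p} := fun p hp => (hψ p hp).1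
  have hlog := Real.log_natCast_nonneg (Fintype.card V)
  have hbnd := bnd_rtop_le
    (by nlinarith [logSlope_nonneg (max (doutMax E) 1)]) fun p hp => (hψ p hp).2
  refine ⟨ψ, isRVisit_rtop hG hnd hall hcl, fun h => bnd_rtop_eq_zero h ψ, fun h => ?_,
    fun D hD hdD => ?_⟩
  · rw [h, max_self, logSlope_eq_zero le_rfl, zero_mul, add_zero] at hbnd
    exact le_antisymm (by exact_mod_cast hbnd) (one_le_bnd_rtop hG hnd hall hcl (by omega))
  · have hslope := mul_le_mul_of_nonneg_right
      (logSlope_le_logSlope (max_le hdD (by omega : 1 ≤ D))) hlog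
    rw [div_logb_mul_logb (by norm_num)]
    refine hbnd.trans ?_
    unfold logSlope at hslope ⊢
    linarith

theorem stmt_11 {V : Type u} [Fintype V] [DecidableEq V] (E : V → V → Prop)
    (hG : Acyclic E) :
    ∃ ψ : List V, IsRVisit (rtop E) ψ ∧
      (doutMax E = 0 → bnd (rtop E) ψ = 0) ∧
      (doutMax E = 1 → bnd (rtop E) ψ = 1) ∧
      (∀ D : ℕ, 2 ≤ D → doutMax E ≤ D →
        (bnd (rtop E) ψ : ℝ) ≤
          ((D : ℝ) - 1) / Real.logb 2 (D : ℝ) * Real.logb 2 (Fintype.card V : ℝ) + 1) :=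
  stmt_11_general E hG
end

section
/- Let G = (V,E) be a DAG, let ψ be an r^sin-sequence of G, and let v ∈ ψ. Then the r^sin-enabled reach of v given ψ equals the set of descendants of v not in ψ: reach_{r^sin}(v|ψ) = des(v) ∖ ψ. -/
/-!
Every vertex of an `r^sin`-sequence enables each of its successors, so any descendant `u` of
`v` is visited by extending `ψ` along a path from `v` to `u`, appending each vertex of the path
not yet visited. Cutting this extension right after `u` witnesses `u ∈ reach(v|ψ)` when `u ∉ ψ`;
conversely `u ∉ ψ` is forced because an `r`-sequence has no repeated vertex.
-/

universe u

variable {V : Type u}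

/-- The singleton visit rule. -/
def rsin (E : V → V → Prop) : V → Set (Set V) := fun v =>
  {Q | (pre E v = ∅ ∧ Q = ∅) ∨ ∃ u ∈ pre E v, Q = {u}}

namespace IsRSeq

variable {r : V → Set (Set V)}

theorem of_append {a b : List V} (h : IsRSeq r (a ++ b)) : IsRSeq r a := by
  obtain ⟨hnd, henabled⟩ := h
  refine ⟨hnd.of_append_left, fun i => ?_⟩
  obtain ⟨Q, hQ, hQsub⟩ := henabled ⟨i, by simp; omega⟩
  refine ⟨Q, by simpa [List.getElem_append_left] using hQ, fun x hx => ?_⟩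
  simpa [List.take_append_of_le_length i.2.le] using hQsub x hx

theorem append_singleton_s12 {χ : List V} (h : IsRSeq r χ) {u : V} (hu : u ∉ χ) {Q : Set V}
    (hQ : Q ∈ r u) (hQχ : ∀ x ∈ Q, x ∈ χ) : IsRSeq r (χ ++ [u]) := by
  obtain ⟨hnd, henabled⟩ := h
  refine ⟨List.nodup_append.mpr ⟨hnd, by simp, fun x hx y hy => ?_⟩, fun i => ?_⟩
  · rintro rfl
    exact hu (by simpa [List.mem_singleton.mp hy] using hx)
  rcases (Nat.lt_succ_iff.mp (by simpa using i.2)).lt_or_eq with hlt | heq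
  · obtain ⟨Q', hQ', hQ'sub⟩ := henabled ⟨i, hlt⟩
    refine ⟨Q', by simpa [List.getElem_append_left hlt] using hQ', fun x hx => ?_⟩
    simpa [List.take_append_of_le_length hlt.le] using hQ'sub x hx
  · refine ⟨Q, by simpa [heq] using hQ, fun x hx => ?_⟩
    simpa [heq] using hQχ x hx

theorem append_singleton_rsin {E : V → V → Prop} {χ : List V} (h : IsRSeq (rsin E) χ)
    {w u : V} (hw : w ∈ χ) (hwu : E w u) (hu : u ∉ χ) : IsRSeq (rsin E) (χ ++ [u]) :=
  h.append_singleton_s12 hu (Q := {w}) (Or.inr ⟨w, hwu, rfl⟩) (by simpa using hw)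

end IsRSeq

section Reach

variable {E : V → V → Prop} {r : V → Set (Set V)} {v : V} {ψ : List V}

theorem reach_subset_des_diff : reach E r v ψ ⊆ des E v \ {x | x ∈ ψ} := by
  rintro u ⟨ψ', hdes, hseq⟩
  refine ⟨hdes u (by simp), fun huψ => ?_⟩
  exact List.disjoint_of_nodup_append hseq.1 huψ (by simp)

theorem mem_reach_of_isRSeq_append {ψ' : List V} (hseq : IsRSeq r (ψ ++ ψ'))
    (hdes : ∀ x ∈ ψ', x ∈ des E v) {u : V} (hu : u ∈ ψ') : u ∈ reach E r v ψ := by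
  obtain ⟨t₁, t₂, rfl⟩ := List.append_of_mem hu
  refine ⟨t₁, fun x hx => hdes x (by simp at hx ⊢; tauto), ?_⟩
  exact IsRSeq.of_append (b := t₂) (by simpa using hseq)

theorem exists_isRSeq_append_of_edge {ψ' : List V}
    (hseq : IsRSeq (rsin E) (ψ ++ ψ')) (hdes : ∀ x ∈ ψ', x ∈ des E v) {w u : V}
    (hw : w ∈ ψ ++ ψ') (hwu : E w u) (hu : u ∈ des E v) :
    ∃ ψ'' : List V, (∀ x ∈ ψ'', x ∈ des E v) ∧ IsRSeq (rsin E) (ψ ++ ψ'') ∧ u ∈ ψ ++ ψ'' := by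
  by_cases hvisited : u ∈ ψ ++ ψ'
  · exact ⟨ψ', hdes, hseq, hvisited⟩
  · refine ⟨ψ' ++ [u], fun x hx => ?_, ?_, by simp⟩
    · rcases List.mem_append.mp hx with hx | hx
      · exact hdes x hx
      · rwa [List.mem_singleton.mp hx]
    · simpa using hseq.append_singleton_rsin hw hwu hvisited

theorem exists_isRSeq_append_of_mem_des (hψ : IsRSeq (rsin E) ψ) (hv : v ∈ ψ) {u : V}
    (hu : u ∈ des E v) :
    ∃ ψ' : List V, (∀ x ∈ ψ', x ∈ des E v) ∧ IsRSeq (rsin E) (ψ ++ ψ') ∧ u ∈ ψ ++ ψ' := by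
  induction hu with
  | single hvb =>
    exact exists_isRSeq_append_of_edge (ψ' := []) (by simpa using hψ) (by simp)
      (by simpa using hv) hvb (.single hvb)
  | tail hvw hwu ih =>
    obtain ⟨ψ', hdes, hseq, hw⟩ := ih
    exact exists_isRSeq_append_of_edge hseq hdes hw hwu (hvw.tail hwu)

end Reach

theorem stmt_12_general {V : Type u} (E : V → V → Prop)
    (ψ : List V) (hψ : IsRSeq (rsin E) ψ) (v : V) (hv : v ∈ ψ) :
    reach E (rsin E) v ψ = des E v \ {x | x ∈ ψ} := by
  refine reach_subset_des_diff.antisymm fun u ⟨hu, huψ⟩ => ?_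
  obtain ⟨ψ', hdes, hseq, hu'⟩ := exists_isRSeq_append_of_mem_des hψ hv hu
  exact mem_reach_of_isRSeq_append hseq hdes ((List.mem_append.mp hu').resolve_left huψ)

theorem stmt_12 {V : Type u} [Fintype V] [DecidableEq V] (E : V → V → Prop) (hG : Acyclic E)
    (ψ : List V) (hψ : IsRSeq (rsin E) ψ) (v : V) (hv : v ∈ ψ) :
    reach E (rsin E) v ψ = des E v \ {x | x ∈ ψ} :=
  stmt_12_general E ψ hψ v hv
end
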